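/- arXiv:2204.00440 — 2 statements merged into one kernel-verified Lean document; each statement's English description precedes it below -/
import Mathlib

section
/- Let K be a Hermitian n×n complex matrix and let σ = exp(−K)/tr(exp(−K)) be the associated Gibbs density matrix. If ρ is a density matrix with S(ρ) ≥ S(σ) and Re tr(ρK) = Re tr(σK), then ρ = σ. (Finite-dimensional form of the mechanism behind Theorems thm-main-2 and main-thm-1: equality of mean energy and entropy with the Gibbs state forces the state to be the Gibbs state.) -/
/-!
Diagonalise `K = U diag(κ) U*` and `ρ = V diag(p) V*`, and let `q = e^{-κ}/Z` be the Gibbs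
weights. The matrix `c_ij = |(V* U)_ij|²` is doubly stochastic, and in these coordinates the
free energy is `Re tr(ρK) − S(ρ) = −log Z + Σ_ij c_ij q_j klFun(p_i/q_j)`, while that of the
Gibbs state is `−log Z`. Since `klFun ≥ 0` vanishes only at `1`, equal energy and no smaller
entropy force `p_i = q_j` whenever `(V* U)_ij ≠ 0`; then `diag(p) (V* U) = (V* U) diag(q)`,
which is `ρ = σ`.
-/

open scoped Matrix ComplexOrder

/-- The von Neumann entropy of a matrix: `−Σ_i λ_i log λ_i` over the eigenvalues
(with the convention `0 log 0 = 0`), defined for Hermitian matrices. -/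
noncomputable def vnEntropy {n : ℕ} (ρ : Matrix (Fin n) (Fin n) ℂ) : ℝ :=
  if h : ρ.IsHermitian then ∑ i, Real.negMulLog (h.eigenvalues i) else 0

open Matrix Finset Unitary InformationTheory

lemma InformationTheory.mul_klFun_div {p q : ℝ} (hq : q ≠ 0) :
    q * klFun (p / q) = p * (Real.log p - Real.log q) + (q - p) := by
  rcases eq_or_ne p 0 with rfl | hp
  · simp [klFun_zero]
  · rw [klFun, Real.log_div hp hq]
    field_simp
    ring

section Gibbs

variable {ι : Type*} [Fintype ι]

noncomputable def partitionFunction (κ : ι → ℝ) : ℝ := ∑ i, Real.exp (-κ i)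

noncomputable def gibbsWeights (κ : ι → ℝ) (i : ι) : ℝ := Real.exp (-κ i) / partitionFunction κ

variable [Nonempty ι]

lemma partitionFunction_pos (κ : ι → ℝ) : 0 < partitionFunction κ :=
  sum_pos (fun _ _ => Real.exp_pos _) univ_nonempty

lemma gibbsWeights_pos (κ : ι → ℝ) (i : ι) : 0 < gibbsWeights κ i :=
  div_pos (Real.exp_pos _) (partitionFunction_pos κ)

lemma sum_gibbsWeights (κ : ι → ℝ) : ∑ i, gibbsWeights κ i = 1 := by
  simp only [gibbsWeights]
  rw [← sum_div]
  exact div_self (partitionFunction_pos κ).ne'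

lemma log_gibbsWeights (κ : ι → ℝ) (i : ι) :
    Real.log (gibbsWeights κ i) = -κ i - Real.log (partitionFunction κ) := by
  rw [gibbsWeights, Real.log_div (Real.exp_pos _).ne' (partitionFunction_pos κ).ne', Real.log_exp]

end Gibbs

namespace Matrix

variable {ι : Type*} [Fintype ι] [DecidableEq ι]

lemma sum_mul_log_sub_log_eq_sum_klFun {c : Matrix ι ι ℝ} (hc : c ∈ doublyStochastic ℝ ι)
    {p q : ι → ℝ} (hq : ∀ j, q j ≠ 0) (hpq : ∑ i, p i = ∑ j, q j) :
    ∑ i, ∑ j, c i j * (p i * (Real.log (p i) - Real.log (q j))) =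
      ∑ i, ∑ j, c i j * (q j * klFun (p i / q j)) := by
  have hbalance : ∑ i, ∑ j, c i j * (q j - p i) = 0 := by
    simp only [mul_sub, sum_sub_distrib]
    rw [sum_comm]
    simp only [← sum_mul, sum_col_of_mem_doublyStochastic hc,
      sum_row_of_mem_doublyStochastic hc, one_mul, hpq, sub_self]
  simp only [mul_klFun_div (hq _), mul_add, sum_add_distrib, hbalance, add_zero]

lemma eq_of_sum_mul_log_sub_log_nonpos {c : Matrix ι ι ℝ} (hc : c ∈ doublyStochastic ℝ ι)
    {p q : ι → ℝ} (hp : ∀ i, 0 ≤ p i) (hq : ∀ j, 0 < q j) (hpq : ∑ i, p i = ∑ j, q j)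
    (h : ∑ i, ∑ j, c i j * (p i * (Real.log (p i) - Real.log (q j))) ≤ 0)
    {i j : ι} (hij : c i j ≠ 0) : p i = q j := by
  rw [sum_mul_log_sub_log_eq_sum_klFun hc (fun j => (hq j).ne') hpq] at h
  have hterm_nonneg : ∀ i j, 0 ≤ c i j * (q j * klFun (p i / q j)) := fun i j =>
    mul_nonneg (nonneg_of_mem_doublyStochastic hc)
      (mul_nonneg (hq j).le (klFun_nonneg (div_nonneg (hp i) (hq j).le)))
  have hterm : c i j * (q j * klFun (p i / q j)) = 0 := by
    have hsum := le_antisymm h (sum_nonneg fun i _ => sum_nonneg fun j _ => hterm_nonneg i j)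
    rw [sum_eq_zero_iff_of_nonneg fun i _ => sum_nonneg fun j _ => hterm_nonneg i j] at hsum
    exact (sum_eq_zero_iff_of_nonneg fun j _ => hterm_nonneg i j).mp (hsum i (mem_univ i)) j
      (mem_univ j)
  rw [mul_eq_zero, mul_eq_zero, klFun_eq_zero_iff (div_nonneg (hp i) (hq j).le),
    div_eq_one_iff_eq (hq j).ne'] at hterm
  exact hterm.resolve_left hij |>.resolve_left (hq j).ne'

noncomputable def unistochastic (U : unitaryGroup ι ℂ) : Matrix ι ι ℝ :=
  of fun i j => Complex.normSq ((U : Matrix ι ι ℂ) i j)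

lemma unistochastic_mem_doublyStochastic (U : unitaryGroup ι ℂ) :
    unistochastic U ∈ doublyStochastic ℝ ι := by
  have hrow (U : unitaryGroup ι ℂ) (i : ι) : ∑ j, unistochastic U i j = 1 := by
    have h := congrFun (congrFun (Unitary.coe_mul_star_self U) i) i
    simp only [Unitary.coe_star, mul_apply, star_apply, Complex.star_def, Complex.mul_conj,
      one_apply_eq] at h
    exact_mod_cast h
  refine mem_doublyStochastic_iff_sum.mpr ⟨fun i j => Complex.normSq_nonneg _, hrow U, fun j => ?_⟩
  simpa [unistochastic, star_apply] using hrow (star U) j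

section RCLike

variable {𝕜 : Type*} [RCLike 𝕜]

lemma exp_conjStarAlgAut (U : unitaryGroup ι 𝕜) (A : Matrix ι ι 𝕜) :
    NormedSpace.exp (conjStarAlgAut 𝕜 _ U A) = conjStarAlgAut 𝕜 _ U (NormedSpace.exp A) := by
  simpa using exp_units_conj (Unitary.toUnits U) A

lemma trace_conjStarAlgAut (U : unitaryGroup ι 𝕜) (A : Matrix ι ι 𝕜) :
    (conjStarAlgAut 𝕜 _ U A).trace = A.trace := by
  rw [conjStarAlgAut_apply, trace_mul_cycle, Unitary.coe_star_mul_self, one_mul]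

lemma isHermitian_conjStarAlgAut_diagonal (U : unitaryGroup ι 𝕜) (d : ι → ℝ) :
    (conjStarAlgAut 𝕜 _ U (diagonal (RCLike.ofReal ∘ d))).IsHermitian := by
  rw [conjStarAlgAut_apply]
  exact isHermitian_mul_mul_conjTranspose _ (isHermitian_diagonal_of_self_adjoint _ (by ext; simp))

open Polynomial in
lemma IsHermitian.sum_comp_eigenvalues_of_eq_conjStarAlgAut {A : Matrix ι ι 𝕜}
    (hA : A.IsHermitian) (U : unitaryGroup ι 𝕜) (d : ι → ℝ)
    (h : A = conjStarAlgAut 𝕜 _ U (diagonal (RCLike.ofReal ∘ d))) (f : ℝ → ℝ) :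
    ∑ i, f (hA.eigenvalues i) = ∑ i, f (d i) := by
  have hcharpoly : A.charpoly = ∏ i, (X - C (d i : 𝕜)) := by
    rw [h, conjStarAlgAut_apply, charpoly_mul_comm, ← mul_assoc]
    simp [charpoly_diagonal]
  have hroots : (univ.val.map hA.eigenvalues).map ((↑) : ℝ → 𝕜) =
      (univ.val.map d).map ((↑) : ℝ → 𝕜) := by
    rw [Multiset.map_map, Multiset.map_map, ← hA.roots_charpoly_eq_eigenvalues, hcharpoly,
      roots_prod _ _ (by simp [prod_ne_zero_iff, X_sub_C_ne_zero])]
    simp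
  have := congrArg (fun s => (s.map f).sum) (Multiset.map_injective RCLike.ofReal_injective hroots)
  simp only [Multiset.map_map] at this
  exact this

end RCLike

lemma IsHermitian.trace_exp_neg_inv_smul_exp_neg {K : Matrix ι ι ℂ} (hK : K.IsHermitian) :
    (NormedSpace.exp (-K)).trace⁻¹ • NormedSpace.exp (-K) =
      conjStarAlgAut ℂ _ hK.eigenvectorUnitary
        (diagonal (RCLike.ofReal ∘ gibbsWeights hK.eigenvalues)) := by
  have hexp : NormedSpace.exp (-K) = conjStarAlgAut ℂ _ hK.eigenvectorUnitary
      (diagonal (RCLike.ofReal ∘ fun i => Real.exp (-hK.eigenvalues i))) := by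
    conv_lhs => rw [hK.spectral_theorem]
    rw [← map_neg, exp_conjStarAlgAut, diagonal_neg, exp_diagonal]
    congr 2
    ext i
    simp [← Complex.exp_eq_exp_ℂ, Complex.ofReal_exp]
  rw [hexp, trace_conjStarAlgAut, trace_diagonal, ← map_smul, ← diagonal_smul]
  congr 2
  ext i
  simp [gibbsWeights, partitionFunction, div_eq_inv_mul]

lemma trace_conjStarAlgAut_diagonal_mul (U V : unitaryGroup ι ℂ) (p a : ι → ℝ) :
    (conjStarAlgAut ℂ _ V (diagonal (RCLike.ofReal ∘ p)) *
      conjStarAlgAut ℂ _ U (diagonal (RCLike.ofReal ∘ a))).trace =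
    ((∑ i, ∑ j, p i * a j * unistochastic (star V * U) i j : ℝ) : ℂ) := by
  set M : Matrix ι ι ℂ := ((star V * U : unitaryGroup ι ℂ) : Matrix ι ι ℂ)
  have hprod : conjStarAlgAut ℂ _ V (diagonal (RCLike.ofReal ∘ p)) *
      conjStarAlgAut ℂ _ U (diagonal (RCLike.ofReal ∘ a)) =
      conjStarAlgAut ℂ _ V
        (diagonal (RCLike.ofReal ∘ p) * M * diagonal (RCLike.ofReal ∘ a) * star M) := by
    simp [M, mul_assoc]
  have hentry : ∀ i j, (diagonal (RCLike.ofReal ∘ p) * M * diagonal (RCLike.ofReal ∘ a) :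
      Matrix ι ι ℂ) i j = p i * M i j * a j := by simp
  rw [hprod, trace_conjStarAlgAut]
  simp only [trace, diag, mul_apply (M := _ * M * _), hentry, star_apply, unistochastic, of_apply]
  push_cast
  refine sum_congr rfl fun i _ => sum_congr rfl fun j _ => ?_
  rw [← Complex.mul_conj]
  simp only [Submonoid.coe_mul, coe_star, RCLike.star_def, M]
  ring

lemma conjStarAlgAut_diagonal_eq_of_apply_ne_zero (U V : unitaryGroup ι ℂ) {p q : ι → ℝ}
    (h : ∀ i j, ((star V * U : unitaryGroup ι ℂ) : Matrix ι ι ℂ) i j ≠ 0 → p i = q j) :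
    conjStarAlgAut ℂ _ V (diagonal (RCLike.ofReal ∘ p)) =
      conjStarAlgAut ℂ _ U (diagonal (RCLike.ofReal ∘ q)) := by
  set M := star V * U
  have hcomm : diagonal (RCLike.ofReal ∘ p) * (M : Matrix ι ι ℂ) =
      (M : Matrix ι ι ℂ) * diagonal (RCLike.ofReal ∘ q) := by
    ext i j
    rw [diagonal_mul, mul_diagonal]
    by_cases hij : (M : Matrix ι ι ℂ) i j = 0
    · simp [hij]
    · simp [h i j hij, mul_comm]
  have hU : U = V * M := by rw [← mul_assoc, Unitary.mul_star_self, one_mul]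
  rw [hU]
  simp only [conjStarAlgAut_apply, Submonoid.coe_mul, star_mul]
  rw [mul_assoc (V : Matrix ι ι ℂ) (M : Matrix ι ι ℂ), ← hcomm]
  simp only [mul_assoc]
  rw [← mul_assoc (M : Matrix ι ι ℂ), Unitary.mul_star_self_of_mem M.2, one_mul]

variable [Nonempty ι]

lemma re_trace_mul_sub_sum_negMulLog (U V : unitaryGroup ι ℂ) {p : ι → ℝ}
    (hp : ∑ i, p i = 1) (κ : ι → ℝ) :
    (conjStarAlgAut ℂ _ V (diagonal (RCLike.ofReal ∘ p)) *
      conjStarAlgAut ℂ _ U (diagonal (RCLike.ofReal ∘ κ))).trace.re - ∑ i, Real.negMulLog (p i) =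
    ∑ i, ∑ j, unistochastic (star V * U) i j *
      (p i * (Real.log (p i) - Real.log (gibbsWeights κ j))) - Real.log (partitionFunction κ) := by
  have hrow := sum_row_of_mem_doublyStochastic (unistochastic_mem_doublyStochastic (star V * U))
  set c := unistochastic (star V * U)
  set logZ := Real.log (partitionFunction κ)
  have hsplit : ∀ i, ∑ j, c i j * (p i * (Real.log (p i) - Real.log (gibbsWeights κ j))) =
      ∑ j, p i * κ j * c i j + (p i * Real.log (p i) + p i * logZ) := fun i => calc
    _ = ∑ j, (p i * κ j * c i j + c i j * (p i * Real.log (p i) + p i * logZ)) :=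
      sum_congr rfl fun j _ => by rw [log_gibbsWeights]; ring
    _ = _ := by rw [sum_add_distrib, ← sum_mul, hrow i, one_mul]
  rw [trace_conjStarAlgAut_diagonal_mul, Complex.ofReal_re]
  simp only [hsplit, sum_add_distrib, ← sum_mul, hp, Real.negMulLog, neg_mul, sum_neg_distrib]
  ring

lemma conjStarAlgAut_diagonal_eq_gibbs_of_le (U V : unitaryGroup ι ℂ) {p : ι → ℝ}
    (hp : ∀ i, 0 ≤ p i) (hp1 : ∑ i, p i = 1) (κ : ι → ℝ)
    (h : (conjStarAlgAut ℂ _ V (diagonal (RCLike.ofReal ∘ p)) *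
        conjStarAlgAut ℂ _ U (diagonal (RCLike.ofReal ∘ κ))).trace.re -
          ∑ i, Real.negMulLog (p i) ≤
      (conjStarAlgAut ℂ _ U (diagonal (RCLike.ofReal ∘ gibbsWeights κ)) *
        conjStarAlgAut ℂ _ U (diagonal (RCLike.ofReal ∘ κ))).trace.re -
          ∑ i, Real.negMulLog (gibbsWeights κ i)) :
    conjStarAlgAut ℂ _ V (diagonal (RCLike.ofReal ∘ p)) =
      conjStarAlgAut ℂ _ U (diagonal (RCLike.ofReal ∘ gibbsWeights κ)) := by
  rw [re_trace_mul_sub_sum_negMulLog U V hp1,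
    re_trace_mul_sub_sum_negMulLog U U (sum_gibbsWeights κ)] at h
  have hgibbs : unistochastic (star U * U) = 1 := by
    ext i j
    simp [unistochastic, one_apply, apply_ite]
  simp only [hgibbs, one_apply, ite_mul, one_mul, zero_mul, sum_ite_eq, mem_univ, if_true,
    sub_self, mul_zero, sum_const_zero, zero_sub] at h
  refine conjStarAlgAut_diagonal_eq_of_apply_ne_zero U V fun i j hij =>
    eq_of_sum_mul_log_sub_log_nonpos (unistochastic_mem_doublyStochastic _) hp
      (gibbsWeights_pos κ) (by rw [hp1, sum_gibbsWeights]) (by linarith) ?_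
  simpa [unistochastic] using hij

end Matrix

lemma vnEntropy_conjStarAlgAut_diagonal {n : ℕ} (U : unitaryGroup (Fin n) ℂ) (d : Fin n → ℝ) :
    vnEntropy (conjStarAlgAut ℂ _ U (diagonal (RCLike.ofReal ∘ d))) =
      ∑ i, Real.negMulLog (d i) := by
  rw [vnEntropy, dif_pos (isHermitian_conjStarAlgAut_diagonal U d)]
  exact IsHermitian.sum_comp_eigenvalues_of_eq_conjStarAlgAut _ U d rfl _

theorem eq_gibbs_of_entropy_ge_and_energy_eq_general {n : ℕ}
    (K ρ σ : Matrix (Fin n) (Fin n) ℂ) (hK : K.IsHermitian)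
    (hσ : σ = ((NormedSpace.exp (-K)).trace)⁻¹ • NormedSpace.exp (-K))
    (hρ : ρ.PosSemidef) (hρ1 : ρ.trace = 1)
    (hS : vnEntropy σ ≤ vnEntropy ρ)
    (hE : ((ρ * K).trace).re = ((σ * K).trace).re) :
    ρ = σ := by
  rcases isEmpty_or_nonempty (Fin n) with _ | _
  · exact Subsingleton.elim ρ σ
  have hρH : ρ.IsHermitian := hρ.isHermitian
  have hρV : ρ = conjStarAlgAut ℂ _ hρH.eigenvectorUnitary
      (diagonal (RCLike.ofReal ∘ hρH.eigenvalues)) := hρH.spectral_theorem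
  have hσU := hσ.trans hK.trace_exp_neg_inv_smul_exp_neg
  have hp1 : ∑ i, hρH.eigenvalues i = 1 := by
    rw [← RCLike.ofReal_inj (K := ℂ), RCLike.ofReal_sum, ← hρH.trace_eq_sum_eigenvalues, hρ1,
      RCLike.ofReal_one]
  have hSρ := vnEntropy_conjStarAlgAut_diagonal hρH.eigenvectorUnitary hρH.eigenvalues
  have hSσ := vnEntropy_conjStarAlgAut_diagonal hK.eigenvectorUnitary
    (gibbsWeights hK.eigenvalues)
  rw [← hρV] at hSρ
  rw [← hσU] at hSσ
  rw [hρV, hσU]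
  refine conjStarAlgAut_diagonal_eq_gibbs_of_le _ _ hρ.eigenvalues_nonneg hp1 _ ?_
  rw [← hρV, ← hσU, ← hK.spectral_theorem, ← hSρ, ← hSσ]
  linarith

/-- If a density matrix `ρ` has entropy at least that of the Gibbs state
`σ = exp(−K)/tr(exp(−K))` and the same mean energy, then `ρ = σ`. -/
theorem eq_gibbs_of_entropy_ge_and_energy_eq {n : ℕ} (hn : 0 < n)
    (K ρ σ : Matrix (Fin n) (Fin n) ℂ) (hK : K.IsHermitian)
    (hσ : σ = ((NormedSpace.exp (-K)).trace)⁻¹ • NormedSpace.exp (-K))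
    (hρ : ρ.PosSemidef) (hρ1 : ρ.trace = 1)
    (hS : vnEntropy σ ≤ vnEntropy ρ)
    (hE : ((ρ * K).trace).re = ((σ * K).trace).re) :
    ρ = σ :=
  eq_gibbs_of_entropy_ge_and_energy_eq_general K ρ σ hK hσ hρ hρ1 hS hE
end

section
/- Let H and W be Hermitian n×n complex matrices, and let σ = exp(−(H+W))/tr(exp(−(H+W))) and τ = exp(−H)/tr(exp(−H)) be the corresponding Gibbs density matrices. Then ‖log σ − log τ‖ ≤ 2‖W‖. (Finite-dimensional form of the Hiai–Petz estimate underlying Proposition mil-la (1): perturbing the Hamiltonian by a surface energy W changes the logarithm of the Gibbs density by at most 2‖W‖ in operator norm.) -/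
/-!
For Hermitian `A`, the Gibbs state `exp A / tr exp A` has logarithm `A - log Z(A)` with
`Z(A) = tr exp A`, so `log σ - log τ = -W - (log Z(-(H+W)) - log Z(-H))` and it suffices that
`A ↦ log Z(A)` is `1`-Lipschitz for the operator norm.

For this, conjugate `A` into an eigenbasis of `B`. There the diagonal entries of `A` are within
`‖A - B‖` of the eigenvalues of `B`, while, by Jensen's inequality for `exp` applied to the
spectral decomposition of `A`, `tr exp A` dominates the sum of the exponentials of the diagonal
entries of `A` in any orthonormal basis (Peierls' inequality).
Hence `Z(A) ≥ e^{-‖A - B‖} Z(B)`.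
-/

open scoped Matrix ComplexOrder

/-- The ℓ²→ℓ² operator norm of a complex matrix. -/
noncomputable def opNorm {n : ℕ} (A : Matrix (Fin n) (Fin n) ℂ) : ℝ :=
  ‖Matrix.toEuclideanCLM (𝕜 := ℂ) A‖

/-- The logarithm of a Hermitian matrix, obtained by applying the real logarithm to the
eigenvalues in a spectral decomposition (and junk value `0` otherwise). -/
noncomputable def matLog {n : ℕ} (A : Matrix (Fin n) (Fin n) ℂ) : Matrix (Fin n) (Fin n) ℂ :=
  if h : A.IsHermitian then
    (h.eigenvectorUnitary : Matrix (Fin n) (Fin n) ℂ) *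
      Matrix.diagonal (fun i => (Real.log (h.eigenvalues i) : ℂ)) *
      (star (h.eigenvectorUnitary : Matrix (Fin n) (Fin n) ℂ))
  else 0

open scoped Matrix.Norms.L2Operator
open NormedSpace Unitary

theorem Unitary.norm_conjStarAlgAut {S E : Type*} [NormedRing E] [StarRing E] [CStarRing E]
    [SMul S E] [IsScalarTower S E E] [SMulCommClass S E E] (u : unitary E) (x : E) :
    ‖conjStarAlgAut S E u x‖ = ‖x‖ := by
  rw [conjStarAlgAut_apply, ← coe_star, CStarRing.norm_mul_coe_unitary,
    CStarRing.norm_coe_unitary_mul]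

namespace Matrix

theorem norm_apply_le_l2_opNorm {𝕜 m n : Type*} [RCLike 𝕜] [Fintype m] [Fintype n]
    [DecidableEq n] (A : Matrix m n 𝕜) (i : m) (j : n) : ‖A i j‖ ≤ ‖A‖ := by
  have h := A.l2_opNorm_mulVec (EuclideanSpace.single j 1)
  rw [PiLp.norm_single, norm_one, mul_one] at h
  refine le_trans (le_of_eq ?_) ((PiLp.norm_apply_le _ i).trans h)
  simp [EuclideanSpace.single]

variable {n : Type*} [Fintype n] [DecidableEq n]

theorem trace_conjStarAlgAut_s10 {R : Type*} [CommRing R] [StarRing R] (u : unitary (Matrix n n R))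
    (A : Matrix n n R) : (conjStarAlgAut R _ u A).trace = A.trace := by
  rw [conjStarAlgAut_apply, trace_mul_cycle, coe_star_mul_self, one_mul]

section RCLike

variable {𝕜 : Type*} [RCLike 𝕜]

theorem re_conjStarAlgAut_diagonal_apply_self (U : unitary (Matrix n n 𝕜)) (d : n → ℝ)
    (i : n) :
    RCLike.re (conjStarAlgAut 𝕜 _ U (diagonal (RCLike.ofReal ∘ d)) i i)
      = ∑ j, ‖(U : Matrix n n 𝕜) i j‖ ^ 2 * d j := by
  rw [conjStarAlgAut_apply, mul_apply, map_sum]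
  refine Finset.sum_congr rfl fun j _ => ?_
  rw [mul_diagonal, star_apply, RCLike.star_def, mul_right_comm, RCLike.mul_conj,
    Function.comp_apply, ← RCLike.ofReal_pow, ← RCLike.ofReal_mul, RCLike.ofReal_re]

theorem sum_norm_sq_unitary_apply (U : unitary (Matrix n n 𝕜)) (i : n) :
    ∑ j, ‖(U : Matrix n n 𝕜) i j‖ ^ 2 = 1 := by
  simpa using (re_conjStarAlgAut_diagonal_apply_self U 1 i).symm

end RCLike

theorem exp_conjStarAlgAut_s10 (u : unitary (Matrix n n ℂ)) (A : Matrix n n ℂ) :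
    exp (conjStarAlgAut ℂ _ u A) = conjStarAlgAut ℂ _ u (exp A) := by
  simpa using exp_units_conj (Unitary.toUnits u) A

theorem trace_exp_conjStarAlgAut (u : unitary (Matrix n n ℂ)) (A : Matrix n n ℂ) :
    (exp (conjStarAlgAut ℂ _ u A)).trace = (exp A).trace := by
  rw [exp_conjStarAlgAut_s10, trace_conjStarAlgAut_s10]

namespace IsHermitian

variable {A B : Matrix n n ℂ}

theorem exp_eq_conjStarAlgAut_diagonal (hA : A.IsHermitian) :
    NormedSpace.exp A = conjStarAlgAut ℂ _ hA.eigenvectorUnitary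
      (diagonal (RCLike.ofReal ∘ Real.exp ∘ hA.eigenvalues)) := by
  rw [← CFC.real_exp_eq_normedSpace_exp hA, hA.cfc_eq]
  rfl

theorem trace_exp (hA : A.IsHermitian) :
    (NormedSpace.exp A).trace = ∑ i, (Real.exp (hA.eigenvalues i) : ℂ) := by
  rw [hA.exp_eq_conjStarAlgAut_diagonal, conjStarAlgAut_apply, trace_mul_cycle,
    coe_star_mul_self, one_mul, trace_diagonal]
  rfl

theorem re_trace_exp_pos [Nonempty n] (hA : A.IsHermitian) :
    0 < (NormedSpace.exp A).trace.re := by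
  rw [hA.trace_exp, ← Complex.ofReal_sum, Complex.ofReal_re]
  exact Finset.sum_pos (fun i _ => Real.exp_pos _) Finset.univ_nonempty

theorem exp_re_apply_self_le (hA : A.IsHermitian) (i : n) :
    Real.exp (A i i).re ≤ (NormedSpace.exp A i i).re := by
  set U : Matrix n n ℂ := (hA.eigenvectorUnitary : Matrix n n ℂ)
  have hdiag : (A i i).re = ∑ j, ‖U i j‖ ^ 2 * hA.eigenvalues j := by
    conv_lhs => rw [hA.spectral_theorem]
    exact re_conjStarAlgAut_diagonal_apply_self (𝕜 := ℂ) _ _ i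
  have hexp :
      (NormedSpace.exp A i i).re = ∑ j, ‖U i j‖ ^ 2 * Real.exp (hA.eigenvalues j) := by
    rw [hA.exp_eq_conjStarAlgAut_diagonal]
    exact re_conjStarAlgAut_diagonal_apply_self (𝕜 := ℂ) _ (Real.exp ∘ hA.eigenvalues) i
  rw [hdiag, hexp]
  exact convexOn_exp.map_sum_le (fun j _ => by positivity) (sum_norm_sq_unitary_apply _ i)
    (fun j _ => Set.mem_univ _)

theorem sum_exp_re_diag_le_re_trace_exp (hA : A.IsHermitian) :
    ∑ i, Real.exp (A i i).re ≤ (NormedSpace.exp A).trace.re := by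
  rw [trace, Complex.re_sum]
  exact Finset.sum_le_sum fun i _ => hA.exp_re_apply_self_le i

theorem exp_neg_norm_sub_mul_re_trace_exp_le (hA : A.IsHermitian) (hB : B.IsHermitian) :
    Real.exp (-‖A - B‖) * (NormedSpace.exp B).trace.re ≤ (NormedSpace.exp A).trace.re := by
  set A' := conjStarAlgAut ℂ _ (star hB.eigenvectorUnitary) A
  have hA' : A'.IsHermitian := hA.isSelfAdjoint.map _
  have hnorm : ‖A' - diagonal (RCLike.ofReal ∘ hB.eigenvalues)‖ = ‖A - B‖ := by
    rw [← hB.conjStarAlgAut_star_eigenvectorUnitary, ← map_sub, Unitary.norm_conjStarAlgAut]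
  have hdiag (i : n) : hB.eigenvalues i - ‖A - B‖ ≤ (A' i i).re := by
    have h := norm_apply_le_l2_opNorm (A' - diagonal (RCLike.ofReal ∘ hB.eigenvalues)) i i
    rw [hnorm, sub_apply, diagonal_apply_eq] at h
    have h_re := (abs_le.mp ((Complex.abs_re_le_norm _).trans h)).1
    simp only [Complex.coe_algebraMap, Function.comp_apply, Complex.sub_re,
      Complex.ofReal_re] at h_re
    linarith
  calc Real.exp (-‖A - B‖) * (NormedSpace.exp B).trace.re
      = ∑ i, Real.exp (hB.eigenvalues i - ‖A - B‖) := by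
        rw [hB.trace_exp, ← Complex.ofReal_sum, Complex.ofReal_re, Finset.mul_sum]
        exact Finset.sum_congr rfl fun i _ => by rw [← Real.exp_add, neg_add_eq_sub]
    _ ≤ ∑ i, Real.exp (A' i i).re :=
        Finset.sum_le_sum fun i _ => Real.exp_le_exp.mpr (hdiag i)
    _ ≤ (NormedSpace.exp A').trace.re := hA'.sum_exp_re_diag_le_re_trace_exp
    _ = (NormedSpace.exp A).trace.re := by rw [trace_exp_conjStarAlgAut]

theorem abs_log_re_trace_exp_sub_le [Nonempty n] (hA : A.IsHermitian) (hB : B.IsHermitian) :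
    |Real.log (NormedSpace.exp A).trace.re - Real.log (NormedSpace.exp B).trace.re|
      ≤ ‖A - B‖ := by
  have log_le {A B : Matrix n n ℂ} (hA : A.IsHermitian) (hB : B.IsHermitian) :
      Real.log (NormedSpace.exp B).trace.re - ‖A - B‖
        ≤ Real.log (NormedSpace.exp A).trace.re := by
    have h := Real.log_le_log (mul_pos (Real.exp_pos _) hB.re_trace_exp_pos)
      (hA.exp_neg_norm_sub_mul_re_trace_exp_le hB)
    rwa [Real.log_mul (Real.exp_ne_zero _) hB.re_trace_exp_pos.ne', Real.log_exp,
      neg_add_eq_sub] at h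
  have h₁ := log_le hA hB
  have h₂ := log_le hB hA
  rw [norm_sub_rev] at h₂
  exact abs_sub_le_iff.mpr ⟨by linarith, by linarith⟩

end IsHermitian

end Matrix

theorem matLog_eq_log {n : ℕ} {A : Matrix (Fin n) (Fin n) ℂ} (hA : A.IsHermitian) :
    matLog A = CFC.log A := by
  rw [matLog, dif_pos hA, CFC.log, hA.cfc_eq]
  rfl

theorem matLog_trace_inv_smul_exp {n : ℕ} [NeZero n] {A : Matrix (Fin n) (Fin n) ℂ}
    (hA : A.IsHermitian) :
    matLog ((exp A).trace⁻¹ • exp A) = A - algebraMap ℝ _ (Real.log (exp A).trace.re) := by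
  have htrace : (exp A).trace = ((exp A).trace.re : ℂ) := by
    rw [hA.trace_exp, ← Complex.ofReal_sum, Complex.ofReal_re]
  have hspec : ∀ x ∈ spectrum ℝ (exp A), x ≠ 0 := fun x hx h0 =>
    spectrum.zero_notMem ℝ (Matrix.isUnit_exp A) (h0 ▸ hx)
  conv_lhs => rw [htrace, ← Complex.ofReal_inv, Complex.coe_smul]
  rw [matLog_eq_log ((IsSelfAdjoint.all _).smul hA.exp.isSelfAdjoint),
    CFC.log_smul _ hspec (inv_ne_zero hA.re_trace_exp_pos.ne') hA.exp.isSelfAdjoint,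
    CFC.log_exp _ hA.isSelfAdjoint, Real.log_inv, map_neg, neg_add_eq_sub]

/-- Hiai–Petz estimate: for Hermitian `H, W`, the logs of the Gibbs density matrices of
`H + W` and of `H` differ by at most `2‖W‖` in operator norm. -/
theorem log_gibbs_perturbation_bound {n : ℕ} (hn : 0 < n)
    (H W σ τ : Matrix (Fin n) (Fin n) ℂ) (hH : H.IsHermitian) (hW : W.IsHermitian)
    (hσ : σ = ((NormedSpace.exp (-(H + W))).trace)⁻¹ • NormedSpace.exp (-(H + W)))
    (hτ : τ = ((NormedSpace.exp (-H)).trace)⁻¹ • NormedSpace.exp (-H)) :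
    opNorm (matLog σ - matLog τ) ≤ 2 * opNorm W := by
  have : NeZero n := ⟨hn.ne'⟩
  have hK : (-(H + W)).IsHermitian := (hH.add hW).neg
  set r := Real.log (exp (-(H + W))).trace.re - Real.log (exp (-H)).trace.re
  have hr : |r| ≤ ‖W‖ := by
    have h := hK.abs_log_re_trace_exp_sub_le hH.neg
    rwa [show -(H + W) - -H = -W by abel, norm_neg] at h
  have hdiff : matLog σ - matLog τ = -(W + algebraMap ℝ _ r) := by
    rw [hσ, hτ, matLog_trace_inv_smul_exp hK, matLog_trace_inv_smul_exp hH.neg, map_sub]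
    abel
  show ‖matLog σ - matLog τ‖ ≤ 2 * ‖W‖ -- `opNorm` is the norm of `Matrix.Norms.L2Operator`
  calc ‖matLog σ - matLog τ‖
      ≤ ‖W‖ + ‖algebraMap ℝ (Matrix (Fin n) (Fin n) ℂ) r‖ := by
        rw [hdiff, norm_neg]
        exact norm_add_le _ _
    _ ≤ 2 * ‖W‖ := by
        rw [norm_algebraMap', Real.norm_eq_abs]
        linarith
end
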